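/- arXiv:2010.03004 — 9 statements merged into one kernel-verified Lean document; each statement's English description precedes it below -/
import Mathlib

section
/- Let U be an n×n complex unitary matrix and let (a_1, …, a_n) be an orthonormal basis of ℂ^n consisting of eigenvectors of U, with U a_j = λ_j a_j for each j. Then the adjugate of I − U is given by adj(I − U) = Σ_{j=1}^n ( Π_{i ≠ j} (1 − λ_i) ) · a_j a_j^*, where a_j a_j^* denotes the rank-one matrix whose (p,q) entry is (a_j)_p · conj((a_j)_q). -/
/-!
Writing the eigenvectors as the columns of a unitary matrix `A`, one gets
`1 - U = A * diagonal (1 - λ) * A⋆`. The adjugate is anti-multiplicative and for a unitary `A`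
it is `det A • A⋆`, so it commutes with conjugation by `A`; the adjugate of a diagonal matrix is
the diagonal of the complementary products, and expanding `A * diagonal c * A⋆` column by column
gives the sum of rank-one matrices.
-/

open Matrix

namespace Matrix

variable {n R : Type*} [Fintype n] [DecidableEq n]

section CommRing

variable [CommRing R]

theorem adjugate_eq_det_smul_of_mul_eq_one {A B : Matrix n n R} (h : B * A = 1) :
    adjugate A = A.det • B := by
  calc adjugate A = B * A * adjugate A := by rw [h, one_mul]
    _ = A.det • B := by rw [mul_assoc, mul_adjugate, Matrix.mul_smul, mul_one]

variable [StarRing R]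

theorem adjugate_unitary_mul_mul_star {A : Matrix n n R} (hA : A ∈ unitaryGroup n R)
    (M : Matrix n n R) : adjugate (A * M * star A) = A * adjugate M * star A := by
  have hAA : star A * A = 1 := mem_unitaryGroup_iff'.mp hA
  have hdet : (star A).det * A.det = 1 := by rw [← det_mul, hAA, det_one]
  rw [adjugate_mul_distrib, adjugate_mul_distrib,
    adjugate_eq_det_smul_of_mul_eq_one hAA,
    adjugate_eq_det_smul_of_mul_eq_one (mem_unitaryGroup_iff.mp hA)]
  simp only [Matrix.smul_mul, Matrix.mul_smul, smul_smul, mul_comm A.det, hdet, one_smul,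
    mul_assoc]

theorem transpose_of_mem_unitaryGroup {a : n → n → R}
    (ha : ∀ i j, star (a i) ⬝ᵥ a j = if i = j then 1 else 0) :
    (of a)ᵀ ∈ unitaryGroup n R := by
  refine mem_unitaryGroup_iff'.mpr (ext fun i j => ?_)
  simpa [mul_apply, dotProduct, one_apply] using ha i j

theorem eq_mul_diagonal_mul_star_of_mulVec_eq_smul {M : Matrix n n R} {a : n → n → R}
    {lam : n → R} (ha : (of a)ᵀ ∈ unitaryGroup n R) (heig : ∀ j, M *ᵥ a j = lam j • a j) :
    M = (of a)ᵀ * diagonal lam * star (of a)ᵀ := by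
  have hcols : M * (of a)ᵀ = (of a)ᵀ * diagonal lam := by
    ext p j
    rw [mul_diagonal, mul_apply]
    simpa [mulVec, dotProduct, mul_comm] using congrFun (heig j) p
  rw [← hcols, mul_assoc, mem_unitaryGroup_iff.mp ha, mul_one]

end CommRing

theorem mul_diagonal_mul_star_eq_sum_vecMulVec [CommSemiring R] [StarRing R] (a : n → n → R)
    (c : n → R) :
    (of a)ᵀ * diagonal c * star (of a)ᵀ = ∑ j, c j • vecMulVec (a j) (star (a j)) := by
  ext p q
  rw [mul_apply]
  simp only [mul_diagonal, star_apply, transpose_apply, of_apply, sum_apply,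
    smul_apply, vecMulVec_apply, Pi.star_apply, smul_eq_mul]
  exact Finset.sum_congr rfl fun j _ => by ring

end Matrix

theorem stmt0_general {n : ℕ} (U : Matrix (Fin n) (Fin n) ℂ)
    (a : Fin n → (Fin n → ℂ)) (lam : Fin n → ℂ)
    (horth : ∀ i j, dotProduct (star (a i)) (a j) = if i = j then 1 else 0)
    (heig : ∀ j, U.mulVec (a j) = lam j • a j) :
    (1 - U).adjugate =
      ∑ j : Fin n, (∏ i ∈ Finset.univ.erase j, (1 - lam i)) •
        Matrix.vecMulVec (a j) (star (a j)) := by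
  have hA := transpose_of_mem_unitaryGroup horth
  have heig' : ∀ j, (1 - U) *ᵥ a j = (1 - lam j) • a j := fun j => by
    rw [sub_mulVec, one_mulVec, heig, sub_smul, one_smul]
  rw [eq_mul_diagonal_mul_star_of_mulVec_eq_smul hA heig', adjugate_unitary_mul_mul_star hA,
    adjugate_diagonal, mul_diagonal_mul_star_eq_sum_vecMulVec]

/-- For an `n × n` complex unitary matrix `U` with an orthonormal basis of eigenvectors
`a j` (eigenvalues `lam j`), the adjugate of `1 - U` is
`∑ j, (∏_{i ≠ j} (1 - lam i)) • (a j) (a j)^*`. -/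
theorem stmt0 {n : ℕ} (U : Matrix (Fin n) (Fin n) ℂ)
    (hU : U ∈ Matrix.unitaryGroup (Fin n) ℂ)
    (a : Fin n → (Fin n → ℂ)) (lam : Fin n → ℂ)
    (horth : ∀ i j, dotProduct (star (a i)) (a j) = if i = j then 1 else 0)
    (heig : ∀ j, U.mulVec (a j) = lam j • a j) :
    (1 - U).adjugate =
      ∑ j : Fin n, (∏ i ∈ Finset.univ.erase j, (1 - lam i)) •
        Matrix.vecMulVec (a j) (star (a j)) :=
  stmt0_general U a lam horth heig
end

section
/- Let U : ℝ → M_n(ℂ) be a one-parameter family of matrices, let A be an n×n Hermitian matrix, and let t₀ ∈ ℝ be such that U is differentiable at t₀ with derivative U′(t₀) = i·A·U(t₀). Assume U(t₀) is unitary, the kernel of I − U(t₀) is one-dimensional, and let a be a unit vector with U(t₀) a = a. Then the function t ↦ det(I − U(t)) is differentiable at t₀ with derivative equal to −i · trace(adj(I − U(t₀))) · ⟨a, A a⟩. -/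
/-!
By Jacobi's formula the derivative of `det (1 - U t)` at `t₀` is
`tr (adj (1 - U t₀) * (-i A U t₀))`. The kernel of `M = 1 - U t₀` is the line `ℂ a`, and since
`U t₀` is unitary the left kernel of `M` is the line `ℂ a*`. As `M * adj M = adj M * M = det M = 0`,
the columns of `adj M` lie in the kernel and its rows in the left kernel, so `adj M = κ a a*` with
`κ = tr (adj M)` because `a* a = 1`. Then
`tr (adj M * (-i A U t₀)) = -i κ a* A U t₀ a = -i κ ⟨a, A a⟩`.
-/

open Matrix Finset Module

namespace Matrix

section CommRing

variable {n R : Type*} [Fintype n] [CommRing R]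

theorem trace_vecMulVec_mul (u v : n → R) (B : Matrix n n R) :
    (vecMulVec u v * B).trace = v ⬝ᵥ (B *ᵥ u) := by
  rw [vecMulVec_mul, trace_vecMulVec, dotProduct_comm, dotProduct_mulVec]

variable [DecidableEq n]

theorem trace_adjugate_mul (A B : Matrix n n R) :
    (A.adjugate * B).trace = ∑ j, (A.updateCol j fun i => B i j).det := by
  refine Finset.sum_congr rfl fun j _ => ?_
  rw [← cramer_apply, cramer_eq_adjugate_mulVec]
  rfl

theorem det_updateCol_eq_sum_perm (A : Matrix n n R) (j : n) (c : n → R) :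
    (A.updateCol j c).det =
      ∑ σ : Equiv.Perm n, Equiv.Perm.sign σ * ((∏ i ∈ univ.erase j, A (σ i) i) * c (σ j)) := by
  rw [det_apply']
  refine Finset.sum_congr rfl fun σ _ => ?_
  rw [← Finset.prod_erase_mul _ _ (mem_univ j), updateCol_self]
  congr 2
  exact Finset.prod_congr rfl fun i hi => updateCol_ne (ne_of_mem_erase hi)

theorem mulVec_star_eq_of_vecMul_eq [StarRing R] {U : Matrix n n R} (hU : U ∈ unitaryGroup n R)
    {w : n → R} (hw : w ᵥ* U = w) : U *ᵥ star w = star w := by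
  have hstar : Uᴴ *ᵥ star w = star w := by rw [← star_vecMul, hw]
  calc U *ᵥ star w = (U * star U) *ᵥ star w := by
        rw [← mulVec_mulVec, star_eq_conjTranspose, hstar]
    _ = star w := by rw [mem_unitaryGroup_iff.mp hU, one_mulVec]

end CommRing

theorem hasDerivAt_det {𝕜 R n : Type*} [NontriviallyNormedField 𝕜] [NormedCommRing R]
    [NormedAlgebra 𝕜 R] [Fintype n] [DecidableEq n] {M : 𝕜 → Matrix n n R} {M' : Matrix n n R}
    {x : 𝕜} (h : ∀ i j, HasDerivAt (fun t => M t i j) (M' i j) x) :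
    HasDerivAt (fun t => (M t).det) ((M x).adjugate * M').trace x := by
  have hsum := HasDerivAt.fun_sum fun σ (_ : σ ∈ univ) =>
    (HasDerivAt.fun_finsetProd fun i (_ : i ∈ univ) => h (σ i) i).const_mul
      (Equiv.Perm.sign σ : R)
  rw [show (fun t => (M t).det) = _ from funext fun t => det_apply' (M t)]
  refine hsum.congr_deriv ?_
  simp_rw [trace_adjugate_mul, det_updateCol_eq_sum_perm, Finset.mul_sum, smul_eq_mul]
  exact Finset.sum_comm

section Field

variable {n K : Type*} [Fintype n] [Field K]

theorem ker_mulVecLin_eq_span_singleton {M : Matrix n n K}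
    (hker : finrank K (LinearMap.ker M.mulVecLin) = 1) {u : n → K} (hu0 : u ≠ 0)
    (hu : M *ᵥ u = 0) : LinearMap.ker M.mulVecLin = K ∙ u := by
  refine (Submodule.eq_of_le_of_finrank_le ?_ ?_).symm
  · simpa [Submodule.span_le] using hu
  · rw [hker, finrank_span_singleton hu0]

variable [DecidableEq n]

theorem exists_adjugate_eq_vecMulVec {M : Matrix n n K} {u : n → K} (hu0 : u ≠ 0)
    (hker : LinearMap.ker M.mulVecLin = K ∙ u) : ∃ w, M.adjugate = vecMulVec u w := by
  have hu : u ∈ LinearMap.ker M.mulVecLin := hker ▸ Submodule.mem_span_singleton_self u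
  have hdet : M.det = 0 := exists_mulVec_eq_zero_iff.mp ⟨u, hu0, hu⟩
  have hcol (j : n) : ∃ c : K, c • u = M.adjugate *ᵥ Pi.single j 1 := by
    rw [← Submodule.mem_span_singleton, ← hker, LinearMap.mem_ker, mulVecLin_apply,
      mulVec_mulVec, mul_adjugate, hdet, zero_smul, zero_mulVec]
  choose w hw using hcol
  refine ⟨w, ext fun i j => ?_⟩
  rw [vecMulVec_apply, mul_comm, ← smul_eq_mul, ← Pi.smul_apply, hw, mulVec_single_one]
  rfl

theorem vecMul_eq_zero_of_adjugate_eq_vecMulVec {M : Matrix n n K} (hdet : M.det = 0)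
    {u w : n → K} (hu0 : u ≠ 0) (hw : M.adjugate = vecMulVec u w) : w ᵥ* M = 0 := by
  have : vecMulVec u (w ᵥ* M) = 0 := by
    rw [← vecMulVec_mul, ← hw, adjugate_mul, hdet, zero_smul]
  simpa [hu0] using this

theorem exists_adjugate_one_sub_eq_smul_vecMulVec_star [StarRing K] {U : Matrix n n K}
    (hU : U ∈ unitaryGroup n K) (hker : finrank K (LinearMap.ker (1 - U).mulVecLin) = 1)
    {a : n → K} (ha0 : a ≠ 0) (haU : U *ᵥ a = a) :
    ∃ κ : K, (1 - U).adjugate = κ • vecMulVec a (star a) := by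
  have hMa : (1 - U) *ᵥ a = 0 := by rw [sub_mulVec, one_mulVec, haU, sub_self]
  have hspan := ker_mulVecLin_eq_span_singleton hker ha0 hMa
  obtain ⟨w, hw⟩ := exists_adjugate_eq_vecMulVec ha0 hspan
  have hwM := vecMul_eq_zero_of_adjugate_eq_vecMulVec
    (exists_mulVec_eq_zero_iff.mp ⟨a, ha0, hMa⟩) ha0 hw
  have hwU : w ᵥ* U = w := by
    rw [vecMul_sub, vecMul_one, sub_eq_zero] at hwM
    exact hwM.symm
  have hw_mem : star w ∈ K ∙ a := by
    rw [← hspan, LinearMap.mem_ker, mulVecLin_apply, sub_mulVec, one_mulVec,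
      mulVec_star_eq_of_vecMul_eq hU hwU, sub_self]
  obtain ⟨c, hc⟩ := Submodule.mem_span_singleton.mp hw_mem
  refine ⟨star c, ?_⟩
  rw [hw, ← star_star w, ← hc]
  ext i j
  simp [vecMulVec_apply, mul_left_comm]

end Field

end Matrix

theorem stmt3_general {n : ℕ} (U : ℝ → Matrix (Fin n) (Fin n) ℂ)
    (A : Matrix (Fin n) (Fin n) ℂ) (t₀ : ℝ)
    (hderiv : ∀ p q, HasDerivAt (fun t => U t p q) ((Complex.I • (A * U t₀)) p q) t₀)
    (hU : U t₀ ∈ Matrix.unitaryGroup (Fin n) ℂ)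
    (hker : Module.finrank ℂ (LinearMap.ker (1 - U t₀).mulVecLin) = 1)
    (a : Fin n → ℂ) (ha : dotProduct (star a) a = 1)
    (haU : (U t₀).mulVec a = a) :
    HasDerivAt (fun t => (1 - U t).det)
      (-Complex.I * (1 - U t₀).adjugate.trace
        * dotProduct (star a) (A.mulVec a)) t₀ := by
  have ha0 : a ≠ 0 := by
    rintro rfl
    simp at ha
  obtain ⟨κ, hκ⟩ := exists_adjugate_one_sub_eq_smul_vecMulVec_star hU hker ha0 haU
  have hdet := hasDerivAt_det (M := fun t => 1 - U t) (M' := -(Complex.I • (A * U t₀)))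
    fun i j => by simpa using (hderiv i j).const_sub ((1 : Matrix (Fin n) (Fin n) ℂ) i j)
  refine hdet.congr_deriv ?_
  rw [hκ, smul_mul, trace_smul, trace_smul, trace_vecMulVec_mul, trace_vecMulVec,
    dotProduct_comm a, ha, neg_mulVec, smul_mulVec, ← mulVec_mulVec, haU]
  simp only [dotProduct_neg, dotProduct_smul, smul_eq_mul]
  ring

/-- Let `U : ℝ → M_n(ℂ)` be differentiable (entrywise) at `t₀` with derivative
`i • A * U t₀` for a Hermitian `A`; if `U t₀` is unitary, the kernel of `1 - U t₀`
is one-dimensional, and `a` is a unit vector fixed by `U t₀`, then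
`t ↦ det (1 - U t)` has derivative `-i · trace (adj (1 - U t₀)) · ⟨a, A a⟩` at `t₀`. -/
theorem stmt3 {n : ℕ} (U : ℝ → Matrix (Fin n) (Fin n) ℂ)
    (A : Matrix (Fin n) (Fin n) ℂ) (hA : A.IsHermitian) (t₀ : ℝ)
    (hderiv : ∀ p q, HasDerivAt (fun t => U t p q) ((Complex.I • (A * U t₀)) p q) t₀)
    (hU : U t₀ ∈ Matrix.unitaryGroup (Fin n) ℂ)
    (hker : Module.finrank ℂ (LinearMap.ker (1 - U t₀).mulVecLin) = 1)
    (a : Fin n → ℂ) (ha : dotProduct (star a) a = 1)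
    (haU : (U t₀).mulVec a = a) :
    HasDerivAt (fun t => (1 - U t).det)
      (-Complex.I * (1 - U t₀).adjugate.trace
        * dotProduct (star a) (A.mulVec a)) t₀ :=
  stmt3_general U A t₀ hderiv hU hker a ha haU
end

section
/- Let U : ℝ → M_n(ℂ) be a one-parameter family of matrices with U(t) unitary for every t, let A be an n×n Hermitian matrix, and suppose U is differentiable at t₀ with derivative U′(t₀) = i·A·U(t₀). Let θ : ℝ → ℝ and a : ℝ → ℂ^n be differentiable at t₀ and satisfy, for all t in a neighborhood of t₀, that a(t) is a unit vector and U(t) a(t) = e^{iθ(t)} a(t). Then θ′(t₀) = ⟨a(t₀), A a(t₀)⟩ (which is a real number since A is Hermitian). -/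
/-!
Differentiate the two identities `⟨a, a⟩ = 1` and `⟨a, U a⟩ = e^{iθ}` at `t₀`. With `μ = e^{iθ(t₀)}`,
the second gives `⟨a', U a⟩ + i⟨a, A U a⟩ + ⟨a, U a'⟩ = iθ'μ`. Since `U` is unitary and `|μ| = 1`,
`a` is also a left eigenvector, `a* U = μ a*`, so the left side equals
`μ (⟨a', a⟩ + ⟨a, a'⟩) + iμ⟨a, A a⟩`, and the bracket is the derivative of `⟨a, a⟩`, which vanishes.
-/

open Matrix

section Derivatives

variable {𝕜 R ι : Type*} [NontriviallyNormedField 𝕜] [NormedRing R] [NormedAlgebra 𝕜 R]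
  [Fintype ι] {t : 𝕜}

theorem hasDerivAt_dotProduct {u v : 𝕜 → ι → R} {u' v' : ι → R}
    (hu : ∀ i, HasDerivAt (fun t => u t i) (u' i) t)
    (hv : ∀ i, HasDerivAt (fun t => v t i) (v' i) t) :
    HasDerivAt (fun t => u t ⬝ᵥ v t) (u' ⬝ᵥ v t + u t ⬝ᵥ v') t := by
  simpa only [dotProduct, ← Finset.sum_add_distrib] using
    HasDerivAt.fun_sum fun i _ => (hu i).fun_mul (hv i)

theorem hasDerivAt_mulVec_apply {κ : Type*} {M : 𝕜 → Matrix κ ι R} {M' : Matrix κ ι R}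
    {v : 𝕜 → ι → R} {v' : ι → R}
    (hM : ∀ i j, HasDerivAt (fun t => M t i j) (M' i j) t)
    (hv : ∀ j, HasDerivAt (fun t => v t j) (v' j) t) (i : κ) :
    HasDerivAt (fun t => (M t *ᵥ v t) i) ((M' *ᵥ v t + M t *ᵥ v') i) t :=
  hasDerivAt_dotProduct (hM i) hv

theorem hasDerivAt_dotProduct_mulVec {M : 𝕜 → Matrix ι ι R} {M' : Matrix ι ι R}
    {u v : 𝕜 → ι → R} {u' v' : ι → R}
    (hu : ∀ i, HasDerivAt (fun t => u t i) (u' i) t)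
    (hM : ∀ i j, HasDerivAt (fun t => M t i j) (M' i j) t)
    (hv : ∀ i, HasDerivAt (fun t => v t i) (v' i) t) :
    HasDerivAt (fun t => u t ⬝ᵥ (M t *ᵥ v t))
      (u' ⬝ᵥ (M t *ᵥ v t) + u t ⬝ᵥ (M' *ᵥ v t) + u t ⬝ᵥ (M t *ᵥ v')) t := by
  convert hasDerivAt_dotProduct hu (hasDerivAt_mulVec_apply hM hv) using 1
  rw [dotProduct_add, add_assoc]

end Derivatives

theorem Matrix.vecMul_star_eq_smul_of_mem_unitaryGroup {ι R : Type*} [Fintype ι] [DecidableEq ι]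
    [CommRing R] [StarRing R] {U : Matrix ι ι R} (hU : U ∈ unitaryGroup ι R) {v : ι → R} {μ : R}
    (hμ : star μ * μ = 1) (hv : U *ᵥ v = μ • v) :
    star v ᵥ* U = μ • star v := by
  have hUv : Uᴴ *ᵥ v = star μ • v :=
    calc Uᴴ *ᵥ v = (star μ * μ) • (Uᴴ *ᵥ v) := by rw [hμ, one_smul]
      _ = star μ • ((Uᴴ * U) *ᵥ v) := by rw [mul_smul, ← mulVec_smul, ← hv, mulVec_mulVec]
      _ = star μ • v := by rw [← star_eq_conjTranspose, hU.1, one_mulVec]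
  simpa only [star_mulVec, conjTranspose_conjTranspose, star_smul, star_star] using
    congrArg star hUv

theorem stmt4_general {n : ℕ} (U : ℝ → Matrix (Fin n) (Fin n) ℂ)
    (A : Matrix (Fin n) (Fin n) ℂ) (t₀ : ℝ)
    (hUuni : ∀ t, U t ∈ Matrix.unitaryGroup (Fin n) ℂ)
    (hderiv : ∀ p q, HasDerivAt (fun t => U t p q) ((Complex.I • (A * U t₀)) p q) t₀)
    (θ : ℝ → ℝ) (θ' : ℝ) (hθ : HasDerivAt θ θ' t₀)
    (a : ℝ → (Fin n → ℂ)) (a' : Fin n → ℂ)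
    (haDeriv : ∀ p, HasDerivAt (fun t => a t p) (a' p) t₀)
    (hnorm : ∀ᶠ t in nhds t₀, dotProduct (star (a t)) (a t) = 1)
    (heig : ∀ᶠ t in nhds t₀,
      (U t).mulVec (a t) = Complex.exp ((θ t : ℂ) * Complex.I) • a t) :
    (θ' : ℂ) = dotProduct (star (a t₀)) (A.mulVec (a t₀)) := by
  set μ := Complex.exp ((θ t₀ : ℂ) * Complex.I)
  have hstar : ∀ p, HasDerivAt (fun t => star (a t) p) (star a' p) t₀ := fun p => (haDeriv p).star
  have hnorm' : star a' ⬝ᵥ a t₀ + star (a t₀) ⬝ᵥ a' = 0 :=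
    (hasDerivAt_dotProduct hstar haDeriv).unique
      ((hasDerivAt_const t₀ 1).congr_of_eventuallyEq hnorm)
  have hphase : star a' ⬝ᵥ (U t₀ *ᵥ a t₀) + star (a t₀) ⬝ᵥ ((Complex.I • (A * U t₀)) *ᵥ a t₀)
      + star (a t₀) ⬝ᵥ (U t₀ *ᵥ a') = μ * (θ' * Complex.I) := by
    refine (hasDerivAt_dotProduct_mulVec hstar hderiv haDeriv).unique
      ((hθ.ofReal_comp.mul_const Complex.I).cexp.congr_of_eventuallyEq ?_)
    filter_upwards [hnorm, heig] with t hnorm_t heig_t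
    rw [heig_t, dotProduct_smul, hnorm_t, smul_eq_mul, mul_one]
  have hUa : U t₀ *ᵥ a t₀ = μ • a t₀ := heig.self_of_nhds
  have hμ : star μ * μ = 1 := by
    rw [Complex.star_def, Complex.conj_mul', Complex.norm_exp_ofReal_mul_I,
      Complex.ofReal_one, one_pow]
  have hleft := vecMul_star_eq_smul_of_mem_unitaryGroup (hUuni t₀) hμ hUa
  rw [smul_mulVec, ← mulVec_mulVec, hUa, dotProduct_mulVec _ (U t₀), hleft] at hphase
  simp only [dotProduct_smul, smul_dotProduct, mulVec_smul, smul_eq_mul] at hphase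
  have hIμ : Complex.I * μ ≠ 0 := mul_ne_zero Complex.I_ne_zero (Complex.exp_ne_zero _)
  refine (mul_left_cancel₀ hIμ ?_).symm
  linear_combination hphase - μ * hnorm'

/-- Let `U : ℝ → M_n(ℂ)` be a family of unitary matrices, differentiable (entrywise) at
`t₀` with derivative `i • A * U t₀` for a Hermitian `A`.  If `θ : ℝ → ℝ` and
`a : ℝ → ℂ^n` are differentiable at `t₀` and on a neighborhood of `t₀` the vector
`a t` is a unit eigenvector of `U t` with eigenvalue `e^{iθ(t)}`, then
`θ'(t₀) = ⟨a t₀, A (a t₀)⟩`. -/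
theorem stmt4 {n : ℕ} (U : ℝ → Matrix (Fin n) (Fin n) ℂ)
    (A : Matrix (Fin n) (Fin n) ℂ) (hA : A.IsHermitian) (t₀ : ℝ)
    (hUuni : ∀ t, U t ∈ Matrix.unitaryGroup (Fin n) ℂ)
    (hderiv : ∀ p q, HasDerivAt (fun t => U t p q) ((Complex.I • (A * U t₀)) p q) t₀)
    (θ : ℝ → ℝ) (θ' : ℝ) (hθ : HasDerivAt θ θ' t₀)
    (a : ℝ → (Fin n → ℂ)) (a' : Fin n → ℂ)
    (haDeriv : ∀ p, HasDerivAt (fun t => a t p) (a' p) t₀)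
    (hnorm : ∀ᶠ t in nhds t₀, dotProduct (star (a t)) (a t) = 1)
    (heig : ∀ᶠ t in nhds t₀,
      (U t).mulVec (a t) = Complex.exp ((θ t : ℂ) * Complex.I) • a t) :
    (θ' : ℂ) = dotProduct (star (a t₀)) (A.mulVec (a t₀)) :=
  stmt4_general U A t₀ hUuni hderiv θ θ' hθ a a' haDeriv hnorm heig
end

section
/- Let U be a complex unitary matrix of even dimension n = 2m, and let δ ∈ ℂ satisfy δ² = det U. Then δ⁻¹ · det(I − U) is a real number. -/
open Matrix

/-- For a unitary matrix `U` of even dimension and `δ` a square root of `det U`,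
the number `δ⁻¹ * det (1 - U)` is real. -/
theorem stmt5 {n : ℕ} (hn : Even n) (U : Matrix (Fin n) (Fin n) ℂ)
    (hU : U ∈ Matrix.unitaryGroup (Fin n) ℂ)
    (δ : ℂ) (hδ : δ ^ 2 = U.det) :
    ∃ r : ℝ, δ⁻¹ * (1 - U).det = (r : ℂ) := by
  have h1 : star U * U = 1 := hU.1
  have hdet : star U.det * U.det = 1 := by
    have := congrArg Matrix.det h1
    rwa [Matrix.det_mul, Matrix.det_one, Matrix.star_eq_conjTranspose,
      Matrix.det_conjTranspose] at this
  have hdet0 : U.det ≠ 0 := by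
    intro h; simp [h] at hdet
  have hδ0 : δ ≠ 0 := by
    intro h; rw [h] at hδ
    exact hdet0 (by simpa using hδ.symm)
  have hsd : star δ * δ = 1 := by
    have hsq : (star δ * δ) ^ 2 = 1 := by
      rw [mul_pow, ← star_pow, hδ, hdet]
    have hnn : star δ * δ = (Complex.normSq δ : ℂ) := by
      exact (Complex.normSq_eq_conj_mul_self).symm
    rw [hnn] at hsq ⊢
    have h2 : (Complex.normSq δ) ^ 2 = 1 := by exact_mod_cast hsq
    have hpos : 0 ≤ Complex.normSq δ := Complex.normSq_nonneg δ
    have h4 : Complex.normSq δ = 1 := by nlinarith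
    rw [h4]; norm_num
  have hz : star ((1 - U).det) = star U.det * (1 - U).det := by
    have h1' : U.conjTranspose * U = 1 := by
      rw [← Matrix.star_eq_conjTranspose]; exact h1
    have e1 : (1 - U).conjTranspose = U.conjTranspose * (U - 1) := by
      rw [Matrix.mul_sub, Matrix.mul_one, h1', Matrix.conjTranspose_sub,
        Matrix.conjTranspose_one]
    calc star ((1 - U).det) = ((1 - U).conjTranspose).det := by
          rw [Matrix.det_conjTranspose]
      _ = (U.conjTranspose).det * (U - 1).det := by rw [e1, Matrix.det_mul]
      _ = star U.det * (1 - U).det := by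
          rw [Matrix.det_conjTranspose]
          congr 1
          have h5 : U - 1 = -(1 - U) := by abel
          rw [h5, Matrix.det_neg, Fintype.card_fin, hn.neg_one_pow, one_mul]
  refine ⟨(δ⁻¹ * (1 - U).det).re, ?_⟩
  have hsδ : star δ = δ⁻¹ := eq_inv_of_mul_eq_one_left hsd
  have hsu : star U.det = (δ ^ 2)⁻¹ := by
    rw [hδ]; exact eq_inv_of_mul_eq_one_left hdet
  have hw : star (δ⁻¹ * (1 - U).det) = δ⁻¹ * (1 - U).det := by
    rw [star_mul', hz, star_inv₀, hsδ, inv_inv, hsu]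
    field_simp
  exact ((Complex.conj_eq_iff_re.mp hw)).symm
end

section
/- Let A, k, l, φ ∈ ℝ with A ≠ 0, k > 0, l > 0, define g(x) = A cos(kx − φ), and assume g(0)·g′(0) ≠ 0 and g(l)·g′(l) ≠ 0. Let Z be the number of points x ∈ (0, l) with g(x) = 0 and let C be the number of points x ∈ (0, l) with g′(x) = 0 (both are finite). Then 2(Z − C) = sign(g(l)·g′(l)) − sign(g(0)·g′(0)); in particular Z − C ∈ {−1, 0, 1}. -/
/-!
Along `θ = k x - φ`, which increases from `-φ` to `k l - φ`, the zeros of `g` and `g'` are the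
points of `π/2 + πℤ` and `πℤ` that `θ` passes, so `Z` and `C` are the increments of
`⌊θ/π - 1/2⌋` and `⌊θ/π⌋` between the endpoints. The difference `⌊θ/π⌋ - ⌊θ/π - 1/2⌋` is `1` or
`0` according as `θ mod π` lies in `(0, π/2)` or `(π/2, π)`, that is, as `sin θ cos θ` is
positive or negative; and `g g' = -A²k sin θ cos θ`.
-/

open Real Set

theorem OrderIso.image_sep_Ioo {α β : Type*} [Preorder α] [Preorder β] (e : α ≃o β)
    (a b : α) (P : β → Prop) :
    e '' {x ∈ Ioo a b | P (e x)} = {t ∈ Ioo (e a) (e b) | P t} := by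
  rw [← e.image_Ioo]
  exact image_inter_preimage e (Ioo a b) {t | P t}

theorem OrderIso.ncard_sep_Ioo {α β : Type*} [Preorder α] [Preorder β] (e : α ≃o β)
    (a b : α) (P : β → Prop) :
    {x ∈ Ioo a b | P (e x)}.ncard = {t ∈ Ioo (e a) (e b) | P t}.ncard := by
  rw [← e.image_sep_Ioo, ncard_image_of_injective _ e.injective]

theorem OrderIso.finite_sep_Ioo_iff {α β : Type*} [Preorder α] [Preorder β] (e : α ≃o β)
    (a b : α) (P : β → Prop) :
    {x ∈ Ioo a b | P (e x)}.Finite ↔ {t ∈ Ioo (e a) (e b) | P t}.Finite := by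
  rw [← e.image_sep_Ioo, finite_image_iff e.injective.injOn]

theorem sep_Ioo_mem_progression_eq_image {δ p a b : ℝ} (hp : 0 < p)
    (hb : ∀ n : ℤ, b ≠ δ + n * p) :
    {t ∈ Ioo a b | ∃ n : ℤ, t = δ + n * p} =
      (fun n : ℤ => δ + n * p) '' Ioc ⌊(a - δ) / p⌋ ⌊(b - δ) / p⌋ := by
  ext t
  simp only [mem_ofPred_eq, mem_Ioo, mem_image, mem_Ioc, Int.floor_lt, Int.le_floor,
    div_lt_iff₀ hp, le_div_iff₀ hp]
  constructor
  · rintro ⟨⟨hat, htb⟩, n, rfl⟩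
    exact ⟨n, ⟨by linarith, by linarith⟩, rfl⟩
  · rintro ⟨n, ⟨han, hnb⟩, rfl⟩
    exact ⟨⟨by linarith, lt_of_le_of_ne (by linarith) (hb n).symm⟩, n, rfl⟩

theorem finite_and_ncard_sep_Ioo_mem_progression {δ p a b : ℝ} (hp : 0 < p) (hab : a ≤ b)
    (hb : ∀ n : ℤ, b ≠ δ + n * p) :
    {t ∈ Ioo a b | ∃ n : ℤ, t = δ + n * p}.Finite ∧
      ({t ∈ Ioo a b | ∃ n : ℤ, t = δ + n * p}.ncard : ℤ) = ⌊(b - δ) / p⌋ - ⌊(a - δ) / p⌋ := by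
  have hinj : Function.Injective (fun n : ℤ => δ + n * p) := fun m n h => by
    simpa [hp.ne'] using h
  rw [sep_Ioo_mem_progression_eq_image hp hb]
  refine ⟨(finite_Ioc _ _).image _, ?_⟩
  rw [ncard_image_of_injective _ hinj, ← Finset.coe_Ioc, ncard_coe_finset]
  exact Int.card_Ioc_of_le _ _ (Int.floor_le_floor (by gcongr))

theorem finite_and_ncard_sep_Ioo_cos_eq_zero (e : ℝ ≃o ℝ) {a b : ℝ} (hab : a ≤ b)
    (hb : cos (e b) ≠ 0) :
    {x ∈ Ioo a b | cos (e x) = 0}.Finite ∧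
      ({x ∈ Ioo a b | cos (e x) = 0}.ncard : ℤ) = ⌊e b / π - 1 / 2⌋ - ⌊e a / π - 1 / 2⌋ := by
  have hcos : ∀ t, cos t = 0 ↔ ∃ n : ℤ, t = π / 2 + n * π := fun t => by
    rw [cos_eq_zero_iff]
    exact exists_congr fun n => by constructor <;> intro h <;> rw [h] <;> ring
  have hshift : ∀ t, (t - π / 2) / π = t / π - 1 / 2 := fun t => by field_simp
  rw [e.finite_sep_Ioo_iff a b (fun t => cos t = 0), e.ncard_sep_Ioo a b (fun t => cos t = 0)]
  simp only [hcos, ← hshift]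
  exact finite_and_ncard_sep_Ioo_mem_progression pi_pos (e.monotone hab)
    fun n h => hb ((hcos _).mpr ⟨n, h⟩)

theorem finite_and_ncard_sep_Ioo_sin_eq_zero (e : ℝ ≃o ℝ) {a b : ℝ} (hab : a ≤ b)
    (hb : sin (e b) ≠ 0) :
    {x ∈ Ioo a b | sin (e x) = 0}.Finite ∧
      ({x ∈ Ioo a b | sin (e x) = 0}.ncard : ℤ) = ⌊e b / π⌋ - ⌊e a / π⌋ := by
  have hsin : ∀ t, sin t = 0 ↔ ∃ n : ℤ, t = 0 + n * π := fun t => by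
    rw [sin_eq_zero_iff]
    exact exists_congr fun n => by constructor <;> intro h <;> linarith
  rw [e.finite_sep_Ioo_iff a b (fun t => sin t = 0), e.ncard_sep_Ioo a b (fun t => sin t = 0)]
  simpa only [hsin, sub_zero] using finite_and_ncard_sep_Ioo_mem_progression pi_pos
    (e.monotone hab) fun n h => hb ((hsin _).mpr ⟨n, h⟩)

theorem sin_mul_cos_pos_or_neg {θ : ℝ} (hs : sin θ ≠ 0) (hc : cos θ ≠ 0) :
    (⌊θ / π⌋ - ⌊θ / π - 1 / 2⌋ = 1 ∧ 0 < sin θ * cos θ) ∨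
      (⌊θ / π⌋ - ⌊θ / π - 1 / 2⌋ = 0 ∧ sin θ * cos θ < 0) := by
  set n := ⌊θ / π⌋
  set r := Int.fract (θ / π)
  have hθπ : θ / π = n + r := (Int.floor_add_fract _).symm
  have hθ : θ = n * π + r * π := by
    rw [← add_mul, ← hθπ, div_mul_cancel₀ _ pi_ne_zero]
  have hsc : sin θ * cos θ = sin (2 * π * r) / 2 := by
    have : 2 * π * r = 2 * θ - n * (2 * π) := by rw [hθ]; ring
    rw [this, sin_sub_int_mul_two_pi, sin_two_mul]; ring
  have hr0 : 0 < r := (Int.fract_nonneg (θ / π)).lt_of_ne fun h => hs <| by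
    rw [hθ, show r = 0 from h.symm, zero_mul, add_zero, sin_int_mul_pi]
  have hr1 : r < 1 := Int.fract_lt_one _
  have hrh : r ≠ 1 / 2 := fun h => hc <| cos_eq_zero_iff.mpr ⟨n, by rw [hθ, h]; ring⟩
  rcases hrh.lt_or_gt with hr | hr
  · left
    have hfl : ⌊θ / π - 1 / 2⌋ = n - 1 :=
      Int.floor_eq_iff.mpr ⟨by push_cast; linarith, by push_cast; linarith⟩
    refine ⟨by omega, ?_⟩
    rw [hsc]
    have := sin_pos_of_pos_of_lt_pi (x := 2 * π * r) (by positivity) (by nlinarith [pi_pos])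
    linarith
  · right
    have hfl : ⌊θ / π - 1 / 2⌋ = n :=
      Int.floor_eq_iff.mpr ⟨by linarith, by linarith⟩
    refine ⟨by omega, ?_⟩
    rw [hsc, ← sin_sub_two_pi]
    have := sin_neg_of_neg_of_neg_pi_lt (x := 2 * π * r - 2 * π) (by nlinarith [pi_pos])
      (by nlinarith [pi_pos])
    linarith

theorem sign_neg_mul_sin_mul_cos {c θ : ℝ} (hc : 0 < c) (hsin : sin θ ≠ 0) (hcos : cos θ ≠ 0) :
    ∃ N : ℤ, ⌊θ / π⌋ - ⌊θ / π - 1 / 2⌋ = N ∧ (N = 0 ∨ N = 1) ∧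
      Real.sign (-c * (sin θ * cos θ)) = 1 - 2 * N := by
  rcases sin_mul_cos_pos_or_neg hsin hcos with ⟨hN, hsc⟩ | ⟨hN, hsc⟩
  · exact ⟨1, hN, by simp, by rw [sign_of_neg (by nlinarith)]; norm_num⟩
  · exact ⟨0, hN, by simp, by rw [sign_of_pos (by nlinarith)]; norm_num⟩

theorem deriv_const_mul_cos_affine (A k φ : ℝ) :
    deriv (fun x => A * cos (k * x - φ)) = fun x => -(A * k) * sin (k * x - φ) := by
  funext x
  rw [(((hasDerivAt_id' x).const_mul k).sub_const φ).cos.const_mul A |>.deriv]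
  ring

/-- For `g x = A cos (k x - φ)` with `g·g'` nonzero at `0` and `l`, the numbers `Z` of
zeros of `g` and `C` of zeros of `g'` in `(0, l)` are finite and satisfy
`2(Z - C) = sign (g l · g' l) - sign (g 0 · g' 0)`; in particular `Z - C ∈ {-1, 0, 1}`. -/
theorem stmt12 (A k l φ : ℝ) (hA : A ≠ 0) (hk : 0 < k) (hl : 0 < l)
    (g : ℝ → ℝ) (hg : g = fun x => A * Real.cos (k * x - φ))
    (h0 : g 0 * deriv g 0 ≠ 0) (hL : g l * deriv g l ≠ 0) :
    {x ∈ Set.Ioo 0 l | g x = 0}.Finite ∧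
    {x ∈ Set.Ioo 0 l | deriv g x = 0}.Finite ∧
    2 * (({x ∈ Set.Ioo 0 l | g x = 0}.ncard : ℝ)
        - ({x ∈ Set.Ioo 0 l | deriv g x = 0}.ncard : ℝ))
      = Real.sign (g l * deriv g l) - Real.sign (g 0 * deriv g 0) ∧
    (({x ∈ Set.Ioo 0 l | g x = 0}.ncard : ℤ)
        - ({x ∈ Set.Ioo 0 l | deriv g x = 0}.ncard : ℤ)) ∈ ({-1, 0, 1} : Set ℤ) := by
  obtain ⟨e, he⟩ : ∃ e : ℝ ≃o ℝ, ∀ x, e x = k * x - φ :=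
    ⟨(OrderIso.mulLeft₀ k hk).trans (OrderIso.subRight φ), fun _ => rfl⟩
  have hderiv : deriv g = fun x => -(A * k) * sin (e x) := by
    simp only [hg, he, deriv_const_mul_cos_affine]
  have hgg' : ∀ x, g x * deriv g x = -(A ^ 2 * k) * (sin (e x) * cos (e x)) := fun x => by
    rw [hderiv]; simp only [hg, he]; ring
  have hZset : {x ∈ Ioo 0 l | g x = 0} = {x ∈ Ioo 0 l | cos (e x) = 0} := by
    simp [hg, hA, he]
  have hCset : {x ∈ Ioo 0 l | deriv g x = 0} = {x ∈ Ioo 0 l | sin (e x) = 0} := by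
    simp [hderiv, hA, hk.ne']
  have hsc₀ : sin (e 0) ≠ 0 ∧ cos (e 0) ≠ 0 := by simpa [hgg', hA, hk.ne'] using h0
  have hscₗ : sin (e l) ≠ 0 ∧ cos (e l) ≠ 0 := by simpa [hgg', hA, hk.ne'] using hL
  obtain ⟨hZfin, hZ⟩ := finite_and_ncard_sep_Ioo_cos_eq_zero e hl.le hscₗ.2
  obtain ⟨hCfin, hC⟩ := finite_and_ncard_sep_Ioo_sin_eq_zero e hl.le hscₗ.1
  obtain ⟨N₀, hN₀, hN₀01, hs₀⟩ := sign_neg_mul_sin_mul_cos (c := A ^ 2 * k) (by positivity) hsc₀.1 hsc₀.2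
  obtain ⟨Nₗ, hNₗ, hNₗ01, hsₗ⟩ := sign_neg_mul_sin_mul_cos (c := A ^ 2 * k) (by positivity) hscₗ.1 hscₗ.2
  have hZC : ({x ∈ Ioo 0 l | g x = 0}.ncard : ℤ) - {x ∈ Ioo 0 l | deriv g x = 0}.ncard
      = N₀ - Nₗ := by
    rw [hZset, hCset, hZ, hC, ← hN₀, ← hNₗ]; ring
  refine ⟨hZset ▸ hZfin, hCset ▸ hCfin, ?_, ?_⟩
  · rw [hgg', hgg', hs₀, hsₗ]
    have := congrArg (fun z : ℤ => (z : ℝ)) hZC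
    push_cast at this
    linarith
  · rw [hZC]
    rcases hN₀01 with rfl | rfl <;> rcases hNₗ01 with rfl | rfl <;> simp
end

section
/- Let X be a compact metric space, let m be a Borel probability measure on X, let (x_n)_{n≥1} be a sequence in X equidistributed with respect to m, and let f : X → ℝ be a function whose set of discontinuity points has m-measure zero. For t ∈ ℝ set A_t = { n ≥ 1 : f(x_n) = t }, and let F be the σ-algebra on the index set ℕ generated by the sets { A_t : t ∈ ℝ }. Suppose that every set in F has a natural density and that natural density is countably additive on F (so that it defines a probability measure on (ℕ, F)). Then there exists a countable set T ⊆ ℝ such that m(f⁻¹(T)) = 1; equivalently, there are countably many pairwise disjoint Borel sets B_1, B_2, … ⊆ X whose union has m-measure 1 and real numbers c_1, c_2, … such that f is constantly equal to c_j on B_j for each j. -/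
/-!
Let `C` be the conull set of continuity points of `f`. For every value `t`, the set
`closure (f ⁻¹' {t}) ∩ C` lies in `f ⁻¹' {t}`, so these sets are pairwise disjoint, and testing
equidistribution against thickened indicators of `closure (f ⁻¹' {t})` shows that the level set
`A_t = {n | f (x n) = t}` has density at most their measure. Now `ℕ` is the disjoint union of the
countably many `A_t`, `t ∈ range (f ∘ x)` (enumerated along `n` via `disjointed`, a repeated value
contributing an empty piece), so countable additivity gives
`1 = ∑ d(A_t) ≤ ∑ m (closure (f ⁻¹' {t}) ∩ C) ≤ m (f ⁻¹' range (f ∘ x))`.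
-/

/-- A subset `s ⊆ ℕ` has natural density `d` if the proportion of `n < N` lying in `s`
tends to `d` as `N → ∞`. -/
def hasNatDensity (s : Set ℕ) (d : ℝ) : Prop :=
  Filter.Tendsto
    (fun N : ℕ => (∑ n ∈ Finset.range N, Set.indicator s (fun _ => (1 : ℝ)) n) / N)
    Filter.atTop (nhds d)

open MeasureTheory Filter Set Topology

lemma disjointed_eq_bot_of_le {α ι : Type*} [GeneralizedBooleanAlgebra α] [Preorder ι]
    [LocallyFiniteOrderBot ι] {f : ι → α} {i j : ι} (hji : j < i) (h : f i ≤ f j) :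
    disjointed f i = ⊥ := by
  rw [disjointed_apply]
  exact sdiff_eq_bot_iff.2 (h.trans (Finset.le_sup (Finset.mem_Iio.2 hji)))

lemma hasSum_measureReal_disjointed {α : Type*} [MeasurableSpace α] (μ : Measure α)
    [IsFiniteMeasure μ] {s : ℕ → Set α} (hs : ∀ n, MeasurableSet (s n)) :
    HasSum (fun n ↦ μ.real (disjointed s n)) (μ.real (⋃ n, s n)) := by
  have hunion : μ (⋃ n, s n) = ∑' n, μ (disjointed s n) := by
    rw [← iUnion_disjointed, measure_iUnion (disjoint_disjointed s) (.disjointed hs)]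
  rw [measureReal_def, hunion, ENNReal.tsum_toReal_eq fun _ ↦ measure_ne_top _ _]
  exact ENNReal.hasSum_toReal (hunion ▸ measure_ne_top _ _)

section ContinuousLevelSet

variable {X Y : Type*} [TopologicalSpace X] [TopologicalSpace Y] (f : X → Y)

def continuousLevelSet (t : Y) : Set X := closure (f ⁻¹' {t}) ∩ {y | ContinuousAt f y}

variable {f}

lemma continuousLevelSet_subset [T1Space Y] (t : Y) : continuousLevelSet f t ⊆ f ⁻¹' {t} := by
  rintro y ⟨hy, hfy⟩
  simpa [closure_singleton] using closure_mono (image_preimage_subset f {t})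
    (mem_closure_image hfy hy)

lemma disjoint_continuousLevelSet [T1Space Y] {s t : Y} (hst : s ≠ t) :
    Disjoint (continuousLevelSet f s) (continuousLevelSet f t) :=
  ((disjoint_singleton.2 hst).preimage f).mono
    (continuousLevelSet_subset s) (continuousLevelSet_subset t)

variable [MeasurableSpace X]

lemma measure_continuousLevelSet {μ : Measure X} (hf : μ {y | ¬ContinuousAt f y} = 0) (t : Y) :
    μ (continuousLevelSet f t) = μ (closure (f ⁻¹' {t})) :=
  measure_inter_conull hf

lemma measurableSet_continuousLevelSet [OpensMeasurableSpace X]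
    [TopologicalSpace.PseudoMetrizableSpace Y] (t : Y) : MeasurableSet (continuousLevelSet f t) :=
  isClosed_closure.measurableSet.inter (IsGδ.setOfPred_continuousAt f).measurableSet

end ContinuousLevelSet

lemma hasNatDensity_empty : hasNatDensity ∅ 0 := by
  simp [hasNatDensity]

lemma hasNatDensity_univ : hasNatDensity univ 1 := by
  refine tendsto_const_nhds.congr' ?_
  filter_upwards [eventually_ne_atTop 0] with N hN
  simp [hN]

section Equidistributed

variable {X : Type*} [TopologicalSpace X] [MeasurableSpace X]

def Equidistributed (m : Measure X) (x : ℕ → X) : Prop :=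
  ∀ g : X → ℝ, Continuous g →
    Tendsto (fun N : ℕ ↦ (∑ n ∈ Finset.range N, g (x n)) / N) atTop (𝓝 (∫ y, g y ∂m))

variable {m : Measure X} {x : ℕ → X} {s : Set ℕ} {d : ℝ}

lemma Equidistributed.le_integral_of_hasNatDensity (hx : Equidistributed m x) {g : X → ℝ}
    (hg : Continuous g) (hsg : ∀ n, s.indicator (fun _ ↦ (1 : ℝ)) n ≤ g (x n))
    (hd : hasNatDensity s d) : d ≤ ∫ y, g y ∂m :=
  le_of_tendsto_of_tendsto' hd (hx g hg) fun _ ↦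
    div_le_div_of_nonneg_right (Finset.sum_le_sum fun n _ ↦ hsg n) (Nat.cast_nonneg _)

end Equidistributed

lemma Equidistributed.le_measureReal_of_hasNatDensity {X : Type*} [PseudoEMetricSpace X]
    [MeasurableSpace X] [OpensMeasurableSpace X] {m : Measure X} [IsFiniteMeasure m]
    {x : ℕ → X} (hx : Equidistributed m x) {K : Set X} (hK : IsClosed K)
    {s : Set ℕ} (hsK : ∀ n ∈ s, x n ∈ K) {d : ℝ} (hd : hasNatDensity s d) : d ≤ m.real K := by
  have hδ : ∀ k : ℕ, (0 : ℝ) < 1 / (k + 1) := fun _ ↦ Nat.one_div_pos_of_nat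
  refine ge_of_tendsto (tendsto_integral_thickenedIndicator_of_isClosed m hK hδ
    tendsto_one_div_add_atTop_nhds_zero_nat) (Eventually.of_forall fun k ↦ ?_)
  refine hx.le_integral_of_hasNatDensity (by fun_prop) (fun n ↦ ?_) hd
  by_cases hn : n ∈ s
  · simp [hn, thickenedIndicator_one _ _ (hsK n hn)]
  · simp [hn]

lemma Equidistributed.le_measureReal_disjointed_continuousLevelSet {X : Type*}
    [PseudoEMetricSpace X] [MeasurableSpace X] [OpensMeasurableSpace X] {m : Measure X} [IsFiniteMeasure m] {x : ℕ → X}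
    (hx : Equidistributed m x) {f : X → ℝ} (hf : m {y | ¬ContinuousAt f y} = 0) (n : ℕ) {d : ℝ}
    (hd : hasNatDensity (disjointed (fun i ↦ {k | f (x k) = f (x i)}) n) d) :
    d ≤ m.real (disjointed (fun i ↦ continuousLevelSet f (f (x i))) n) := by
  by_cases hrep : ∃ j < n, f (x j) = f (x n)
  · obtain ⟨j, hjn, hj⟩ := hrep
    rw [disjointed_eq_bot_of_le hjn (by simp [hj])] at hd
    rw [tendsto_nhds_unique hd hasNatDensity_empty]
    exact measureReal_nonneg
  push Not at hrep
  rw [disjointed_eq_self fun j hj ↦ disjoint_continuousLevelSet (hrep j hj), measureReal_def,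
    measure_continuousLevelSet hf]
  exact hx.le_measureReal_of_hasNatDensity (K := closure (f ⁻¹' {f (x n)})) isClosed_closure
    (fun k hk ↦ subset_closure (disjointed_subset _ n hk)) hd

theorem stmt14_general {X : Type*} [MetricSpace X]
    [MeasurableSpace X] [BorelSpace X]
    (m : MeasureTheory.Measure X) [MeasureTheory.IsProbabilityMeasure m]
    (x : ℕ → X)
    (hequi : ∀ g : X → ℝ, Continuous g →
      Filter.Tendsto (fun N : ℕ => (∑ n ∈ Finset.range N, g (x n)) / N)
        Filter.atTop (nhds (∫ y, g y ∂m)))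
    (f : X → ℝ)
    (hf : m {y : X | ¬ ContinuousAt f y} = 0)
    (F : MeasurableSpace ℕ)
    (hF : F = MeasurableSpace.generateFrom
      {s : Set ℕ | ∃ t : ℝ, s = {n : ℕ | f (x n) = t}})
    (hdens : ∀ s : Set ℕ, @MeasurableSet ℕ F s → ∃ d : ℝ, hasNatDensity s d)
    (hadd : ∀ B : ℕ → Set ℕ, (∀ i, @MeasurableSet ℕ F (B i)) →
      Pairwise (Function.onFun Disjoint B) →
      ∀ (d : ℕ → ℝ) (D : ℝ), (∀ i, hasNatDensity (B i) (d i)) →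
        hasNatDensity (⋃ i, B i) D → D = ∑' i, d i) :
    ∃ T : Set ℝ, T.Countable ∧ m (f ⁻¹' T) = 1 := by
  set A : ℕ → Set ℕ := fun i ↦ {k | f (x k) = f (x i)}
  have hA : ∀ i, MeasurableSet[F] (A i) := fun i ↦
    hF ▸ MeasurableSpace.measurableSet_generateFrom ⟨f (x i), rfl⟩
  have hAunion : ⋃ i, disjointed A i = univ := by
    rw [iUnion_disjointed]
    exact iUnion_eq_univ_iff.2 fun k ↦ ⟨k, rfl⟩
  choose d hd using fun i ↦ hdens _ (MeasurableSet.disjointed hA i)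
  have hsum : ∑' i, d i = 1 := (hadd _ (MeasurableSet.disjointed hA) (disjoint_disjointed A) d 1
    hd (hAunion ▸ hasNatDensity_univ)).symm
  have hsummable : Summable d := by
    by_contra h
    simp [tsum_eq_zero_of_not_summable h] at hsum
  have hle : 1 ≤ m.real (f ⁻¹' range (f ∘ x)) := calc
    1 = ∑' i, d i := hsum.symm
    _ ≤ m.real (⋃ i, continuousLevelSet f (f (x i))) :=
      hasSum_le (fun i ↦ Equidistributed.le_measureReal_disjointed_continuousLevelSet hequi hf i
        (hd i)) hsummable.hasSum
        (hasSum_measureReal_disjointed m fun i ↦ measurableSet_continuousLevelSet (f (x i)))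
    _ ≤ m.real (f ⁻¹' range (f ∘ x)) := measureReal_mono <| iUnion_subset fun i ↦
      (continuousLevelSet_subset _).trans (preimage_mono (singleton_subset_iff.2 ⟨i, rfl⟩))
  refine ⟨range (f ∘ x), countable_range _, le_antisymm prob_le_one ?_⟩
  simpa using ENNReal.ofReal_le_of_le_toReal hle

/-- Let `(x n)` be equidistributed in a compact metric space `X` with respect to a Borel
probability measure `m`, and let `f : X → ℝ` have an `m`-null set of discontinuity
points.  Let `F` be the σ-algebra on `ℕ` generated by the level index sets
`A_t = {n | f (x n) = t}`.  If every `F`-measurable set has a natural density and natural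
density is countably additive on `F`, then `f` agrees `m`-a.e. with a countable step
function: there is a countable `T ⊆ ℝ` with `m (f⁻¹ T) = 1`. -/
theorem stmt14 {X : Type*} [MetricSpace X] [CompactSpace X]
    [MeasurableSpace X] [BorelSpace X]
    (m : MeasureTheory.Measure X) [MeasureTheory.IsProbabilityMeasure m]
    (x : ℕ → X)
    (hequi : ∀ g : X → ℝ, Continuous g →
      Filter.Tendsto (fun N : ℕ => (∑ n ∈ Finset.range N, g (x n)) / N)
        Filter.atTop (nhds (∫ y, g y ∂m)))
    (f : X → ℝ)
    (hf : m {y : X | ¬ ContinuousAt f y} = 0)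
    (F : MeasurableSpace ℕ)
    (hF : F = MeasurableSpace.generateFrom
      {s : Set ℕ | ∃ t : ℝ, s = {n : ℕ | f (x n) = t}})
    (hdens : ∀ s : Set ℕ, @MeasurableSet ℕ F s → ∃ d : ℝ, hasNatDensity s d)
    (hadd : ∀ B : ℕ → Set ℕ, (∀ i, @MeasurableSet ℕ F (B i)) →
      Pairwise (Function.onFun Disjoint B) →
      ∀ (d : ℕ → ℝ) (D : ℝ), (∀ i, hasNatDensity (B i) (d i)) →
        hasNatDensity (⋃ i, B i) D → D = ∑' i, d i) :
    ∃ T : Set ℝ, T.Countable ∧ m (f ⁻¹' T) = 1 :=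
  stmt14_general m x hequi f hf F hF hdens hadd
end

section
/- Let n₁, n₂ ∈ ℕ and consider complex square matrices indexed by the four-block index set (Fin n₁) ⊔ {e} ⊔ {ê} ⊔ (Fin n₂). Let S have the block structure S = [[S₁, 0, t₁, 0], [t₁′, 0, r₁, 0], [0, r₂, 0, t₂′], [0, t₂, 0, S₂]], where S₁ is n₁×n₁, t₁ is an n₁-column, t₁′ an n₁-row, r₁, r₂ are scalars, and similarly S₂, t₂, t₂′ have size n₂. Let z₁ and z₂ be diagonal matrices of sizes n₁ and n₂, let z_e ∈ ℂ, and set U = (z₁ ⊕ z_e ⊕ z_e ⊕ z₂) · S. Assume D₁ := z₁S₁ − I and D₂ := z₂S₂ − I are invertible, and define the scalars 𝒮₁ := r₁ − t₁′ D₁⁻¹ z₁ t₁ and 𝒮₂ := r₂ − t₂′ D₂⁻¹ z₂ t₂. Then det(U − I) = det(D₁) · det(D₂) · (1 − z_e² 𝒮₁ 𝒮₂); in particular, if n₁ + n₂ is even then det(I − U) = det(D₁) · det(D₂) · (1 − z_e² 𝒮₁ 𝒮₂). -/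
/-- Bridge decomposition of the secular determinant: for the block matrix
`S = [[S₁, 0, t₁, 0], [t₁', 0, r₁, 0], [0, r₂, 0, t₂'], [0, t₂, 0, S₂]]` and
`U = (z₁ ⊕ z_e ⊕ z_e ⊕ z₂) * S` with `D₁ = z₁ S₁ - 1` and `D₂ = z₂ S₂ - 1` invertible,
setting `𝒮ᵢ = rᵢ - tᵢ' Dᵢ⁻¹ zᵢ tᵢ`, one has
`det (U - 1) = det D₁ * det D₂ * (1 - z_e² 𝒮₁ 𝒮₂)`; and if `n₁ + n₂` is even then also
`det (1 - U) = det D₁ * det D₂ * (1 - z_e² 𝒮₁ 𝒮₂)`. -/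
theorem stmt17 {n₁ n₂ : ℕ}
    (S₁ : Matrix (Fin n₁) (Fin n₁) ℂ) (t₁ : Matrix (Fin n₁) Unit ℂ)
    (t₁' : Matrix Unit (Fin n₁) ℂ) (r₁ r₂ : ℂ)
    (S₂ : Matrix (Fin n₂) (Fin n₂) ℂ) (t₂ : Matrix (Fin n₂) Unit ℂ)
    (t₂' : Matrix Unit (Fin n₂) ℂ)
    (z₁ : Fin n₁ → ℂ) (z₂ : Fin n₂ → ℂ) (ze : ℂ)
    (S U : Matrix ((Fin n₁ ⊕ Unit) ⊕ (Unit ⊕ Fin n₂))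
      ((Fin n₁ ⊕ Unit) ⊕ (Unit ⊕ Fin n₂)) ℂ)
    (hS : S = Matrix.fromBlocks
      (Matrix.fromBlocks S₁ 0 t₁' 0)
      (Matrix.fromBlocks t₁ 0 (Matrix.of fun _ _ => r₁) 0)
      (Matrix.fromBlocks 0 (Matrix.of fun _ _ => r₂) 0 t₂)
      (Matrix.fromBlocks 0 t₂' 0 S₂))
    (hU : U = Matrix.diagonal
        (Sum.elim (Sum.elim z₁ fun _ => ze) (Sum.elim (fun _ => ze) z₂)) * S)
    (D₁ : Matrix (Fin n₁) (Fin n₁) ℂ) (hD₁ : D₁ = Matrix.diagonal z₁ * S₁ - 1)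
    (D₂ : Matrix (Fin n₂) (Fin n₂) ℂ) (hD₂ : D₂ = Matrix.diagonal z₂ * S₂ - 1)
    (hD₁u : IsUnit D₁) (hD₂u : IsUnit D₂)
    (s₁ s₂ : ℂ)
    (hs₁ : s₁ = r₁ - (t₁' * D₁⁻¹ * Matrix.diagonal z₁ * t₁) () ())
    (hs₂ : s₂ = r₂ - (t₂' * D₂⁻¹ * Matrix.diagonal z₂ * t₂) () ()) :
    (U - 1).det = D₁.det * D₂.det * (1 - ze ^ 2 * s₁ * s₂) ∧
    (Even (n₁ + n₂) → (1 - U).det = D₁.det * D₂.det * (1 - ze ^ 2 * s₁ * s₂)) := by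

  obtain ⟨iD₁⟩ := hD₁u.nonempty_invertible
  obtain ⟨iD₂⟩ := hD₂u.nonempty_invertible
  haveI : Invertible (1 : Matrix Unit Unit ℂ) := invertibleOne
  haveI : Invertible (-1 : Matrix Unit Unit ℂ) := invertibleNeg 1
  set A : Matrix (Fin n₁ ⊕ Unit) (Fin n₁ ⊕ Unit) ℂ :=
    Matrix.fromBlocks D₁ 0 (ze • t₁') (-1) with hA
  set B : Matrix (Fin n₁ ⊕ Unit) (Unit ⊕ Fin n₂) ℂ :=
    Matrix.fromBlocks (Matrix.diagonal z₁ * t₁) 0 ((ze * r₁) • 1) 0 with hB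
  set C : Matrix (Unit ⊕ Fin n₂) (Fin n₁ ⊕ Unit) ℂ :=
    Matrix.fromBlocks 0 ((ze * r₂) • 1) 0 (Matrix.diagonal z₂ * t₂) with hC
  set Dm : Matrix (Unit ⊕ Fin n₂) (Unit ⊕ Fin n₂) ℂ :=
    Matrix.fromBlocks (-1) (ze • t₂') 0 D₂ with hDm
  have hsplit : U - 1 = Matrix.fromBlocks A B C Dm := by
    rw [hA, hB, hC, hDm, hU, hS, hD₁, hD₂]
    ext i j
    rcases i with (i | i) | (i | i) <;> rcases j with (j | j) | (j | j) <;>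
      simp [Matrix.diagonal_mul, Matrix.one_apply, mul_comm]
  haveI hAinv : Invertible A := by
    rw [hA]; exact Matrix.fromBlocksZero₁₂Invertible D₁ (ze • t₁') (-1)
  have h₁ : t₁' * D₁⁻¹ * (Matrix.diagonal z₁ * t₁) = (r₁ - s₁) • (1 : Matrix Unit Unit ℂ) := by
    rw [← Matrix.mul_assoc]
    ext i j
    simp only [Matrix.smul_apply, Matrix.one_apply_eq, smul_eq_mul, mul_one, hs₁]
    ring_nf
  have h₂ : t₂' * D₂⁻¹ * (Matrix.diagonal z₂ * t₂) = (r₂ - s₂) • (1 : Matrix Unit Unit ℂ) := by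
    rw [← Matrix.mul_assoc]
    ext i j
    simp only [Matrix.smul_apply, Matrix.one_apply_eq, smul_eq_mul, mul_one, hs₂]
    ring_nf
  have hiA : ⅟A = Matrix.fromBlocks D₁⁻¹ 0 (ze • (t₁' * D₁⁻¹)) (-1) :=
    invOf_eq_right_inv (by
      rw [hA, Matrix.fromBlocks_multiply]
      simp only [Matrix.mul_zero, Matrix.zero_mul, add_zero, zero_add,
        Matrix.mul_inv_of_invertible, Matrix.smul_mul, Matrix.neg_mul, Matrix.one_mul,
        neg_mul_neg, Matrix.mul_neg, Matrix.mul_one, add_neg_cancel, neg_neg]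
      rw [Matrix.fromBlocks_one])
  have e21 : ze • (t₁' * D₁⁻¹) * (Matrix.diagonal z₁ * t₁) + -1 * ((ze * r₁) • (1 : Matrix Unit Unit ℂ)) = (-(ze * s₁)) • 1 := by
    rw [Matrix.smul_mul, h₁, Matrix.neg_mul, Matrix.one_mul, smul_smul, ← sub_eq_add_neg,
      ← sub_smul]
    congr 1; ring
  have hAB : ⅟A * B = Matrix.fromBlocks (D₁⁻¹ * (Matrix.diagonal z₁ * t₁)) 0
      ((-(ze * s₁)) • 1) 0 := by
    rw [hiA, hB, Matrix.fromBlocks_multiply]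
    simp only [Matrix.mul_zero, Matrix.zero_mul, add_zero, zero_add]
    rw [e21]
  have hN : Dm - C * ⅟A * B = Matrix.fromBlocks ((ze ^ 2 * r₂ * s₁) • 1 - 1) (ze • t₂')
      ((ze * s₁) • (Matrix.diagonal z₂ * t₂)) D₂ := by
    rw [Matrix.mul_assoc, hAB, hC, hDm, Matrix.fromBlocks_multiply]
    simp only [Matrix.mul_zero, Matrix.zero_mul, add_zero, zero_add, Matrix.smul_mul,
      Matrix.mul_smul, Matrix.one_mul, Matrix.mul_one, smul_smul]
    ext i j
    rcases i with i | i <;> rcases j with j | j <;>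
      simp [Matrix.one_apply, sub_eq_add_neg] <;> ring
  have hBDC : ze • t₂' * D₂⁻¹ * ((ze * s₁) • (Matrix.diagonal z₂ * t₂)) =
      (ze ^ 2 * s₁ * (r₂ - s₂)) • (1 : Matrix Unit Unit ℂ) := by
    rw [Matrix.smul_mul, Matrix.smul_mul, Matrix.mul_smul, h₂, smul_smul, smul_smul]
    congr 1; ring
  have hdetN : (Dm - C * ⅟A * B).det = D₂.det * (ze ^ 2 * s₁ * s₂ - 1) := by
    rw [hN, Matrix.det_fromBlocks₂₂, Matrix.invOf_eq_nonsing_inv, hBDC]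
    congr 1
    have h3 : (ze ^ 2 * r₂ * s₁) • (1 : Matrix Unit Unit ℂ) - 1 -
        (ze ^ 2 * s₁ * (r₂ - s₂)) • 1 = (ze ^ 2 * s₁ * s₂ - 1) • 1 := by
      ext i j
      simp [Matrix.one_apply]
      ring
    rw [h3]
    simp [Matrix.det_unique]
  have hdetA : A.det = -D₁.det := by
    rw [hA, Matrix.det_fromBlocks_zero₁₂]
    simp [Matrix.det_unique]
  have key : (U - 1).det = D₁.det * D₂.det * (1 - ze ^ 2 * s₁ * s₂) := by
    rw [hsplit, Matrix.det_fromBlocks₁₁, hdetA, hdetN]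
    ring
  refine ⟨key, fun he => ?_⟩
  have h4 : (1 : Matrix ((Fin n₁ ⊕ Unit) ⊕ (Unit ⊕ Fin n₂))
      ((Fin n₁ ⊕ Unit) ⊕ (Unit ⊕ Fin n₂)) ℂ) - U = -(U - 1) := (neg_sub U 1).symm
  rw [h4, Matrix.det_neg, key]
  have hcard : Fintype.card ((Fin n₁ ⊕ Unit) ⊕ (Unit ⊕ Fin n₂)) = n₁ + n₂ + 2 := by
    simp [Fintype.card_sum]
    ring
  rw [hcard]
  have he2 : Even (n₁ + n₂ + 2) := he.add even_two
  rw [he2.neg_one_pow, one_mul]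
end

section
/- Let n₁, n₂ ∈ ℕ and let S be a real orthogonal matrix indexed by (Fin n₁) ⊔ {e} ⊔ {ê} ⊔ (Fin n₂) with the block structure S = [[S₁, 0, t₁, 0], [t₁′, 0, r₁, 0], [0, r₂, 0, t₂′], [0, t₂, 0, S₂]]. Let z₁ and z₂ be diagonal matrices of sizes n₁ and n₂ whose diagonal entries all have modulus one, let z_e ∈ ℂ with |z_e| = 1, and set U = (z₁ ⊕ z_e ⊕ z_e ⊕ z₂) · S, a unitary matrix. If a₁ ∈ ℂ^{n₁} satisfies (z₁S₁ − I) a₁ = 0, then t₁′ a₁ = 0, and the vector a = (a₁, 0, 0, 0) (with zeros in the e, ê, and Fin n₂ components) satisfies (I − U) a = 0. -/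
/-!
Orthogonality of `S` makes the columns of `S` indexed by `Fin n₁`, which are supported on the
rows `Fin n₁ ⊕ {e}`, orthonormal: `S₁ᵀ S₁ + t₁'ᵀ t₁' = 1`. Hence
`‖S₁ a₁‖² + ‖t₁' a₁‖² = ‖a₁‖²`. On the other hand `z₁ S₁ a₁ = a₁` with `z₁` unimodular gives
`‖S₁ a₁‖ = ‖a₁‖`, so `t₁' a₁ = 0`. Then `S (a₁, 0, 0, 0) = (S₁ a₁, 0, 0, 0)`, which the diagonal
factor sends back to `(a₁, 0, 0, 0)`.
-/

open Matrix
open scoped ComplexOrder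

namespace Matrix

variable {l m n o R : Type*}

theorem star_mulVec_dotProduct_mulVec [CommSemiring R] [StarRing R] [Fintype m] [Fintype n]
    (M : Matrix m n R) (v : n → R) :
    star (M *ᵥ v) ⬝ᵥ M *ᵥ v = star v ⬝ᵥ (Mᴴ * M) *ᵥ v := by
  rw [star_mulVec, ← dotProduct_mulVec, mulVec_mulVec]

theorem conjTranspose_diagonal_mul_self [Fintype n] [DecidableEq n] [Semiring R] [StarRing R]
    {z : n → R} (hz : ∀ i, star (z i) * z i = 1) : (diagonal z)ᴴ * diagonal z = 1 := by
  rw [diagonal_conjTranspose, diagonal_mul_diagonal, ← diagonal_one]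
  exact congrArg diagonal (funext hz)

theorem star_diagonal_mulVec_dotProduct_diagonal_mulVec [Fintype n] [DecidableEq n]
    [CommSemiring R] [StarRing R] {z : n → R} (hz : ∀ i, star (z i) * z i = 1) (v : n → R) :
    star (diagonal z *ᵥ v) ⬝ᵥ diagonal z *ᵥ v = star v ⬝ᵥ v := by
  rw [star_mulVec_dotProduct_mulVec, conjTranspose_diagonal_mul_self hz, one_mulVec]

theorem mulVec_eq_zero_of_conjTranspose_mul_add_eq_one [CommRing R] [StarRing R] [PartialOrder R]
    [StarOrderedRing R] [NoZeroDivisors R] [Fintype l] [Fintype m] [Fintype n] [DecidableEq n]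
    {A : Matrix m n R} {B : Matrix l n R} (hAB : Aᴴ * A + Bᴴ * B = 1) {v : n → R}
    (hv : star (A *ᵥ v) ⬝ᵥ A *ᵥ v = star v ⬝ᵥ v) : B *ᵥ v = 0 := by
  have hsplit : star (A *ᵥ v) ⬝ᵥ A *ᵥ v + star (B *ᵥ v) ⬝ᵥ B *ᵥ v = star v ⬝ᵥ v := by
    rw [star_mulVec_dotProduct_mulVec, star_mulVec_dotProduct_mulVec, ← dotProduct_add,
      ← add_mulVec, hAB, one_mulVec]
  rw [hv, add_eq_left] at hsplit
  exact dotProduct_star_self_eq_zero.mp hsplit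

theorem fromBlocks_mulVec_sum_elim_zero [Fintype l] [Fintype m] [NonUnitalNonAssocSemiring R]
    (A : Matrix n l R) (B : Matrix n m R) (C : Matrix o l R) (D : Matrix o m R) (v : l → R) :
    fromBlocks A B C D *ᵥ Sum.elim v 0 = Sum.elim (A *ᵥ v) (C *ᵥ v) := by
  simp [fromBlocks_mulVec]

theorem toBlocks₁₁_add [Add R] (M N : Matrix (n ⊕ o) (l ⊕ m) R) :
    (M + N).toBlocks₁₁ = M.toBlocks₁₁ + N.toBlocks₁₁ :=
  rfl

theorem toBlocks₁₁_transpose_mul_self_fromBlocks [Fintype n] [Fintype o]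
    [NonUnitalNonAssocSemiring R]
    (A : Matrix n l R) (B : Matrix n m R) (C : Matrix o l R) (D : Matrix o m R) :
    ((fromBlocks A B C D)ᵀ * fromBlocks A B C D).toBlocks₁₁ = Aᵀ * A + Cᵀ * C := by
  rw [fromBlocks_transpose, fromBlocks_multiply, toBlocks_fromBlocks₁₁]

theorem conjTranspose_map_ofReal (A : Matrix m n ℝ) :
    (A.map Complex.ofReal)ᴴ = Aᵀ.map Complex.ofReal := by
  rw [← conjTranspose_eq_transpose_of_trivial, conjTranspose_map _ fun _ => by simp]

theorem conjTranspose_map_ofReal_mul_add_eq_one [Fintype l] [Fintype m] [Fintype n]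
    [DecidableEq n] {A : Matrix m n ℝ} {B : Matrix l n ℝ} (hAB : Aᵀ * A + Bᵀ * B = 1) :
    (A.map Complex.ofReal)ᴴ * A.map Complex.ofReal
      + (B.map Complex.ofReal)ᴴ * B.map Complex.ofReal = 1 := by
  have h := congrArg Complex.ofRealHom.mapMatrix hAB
  rw [map_add, map_one, RingHom.mapMatrix_apply, RingHom.mapMatrix_apply, Matrix.map_mul,
    Matrix.map_mul] at h
  rwa [conjTranspose_map_ofReal, conjTranspose_map_ofReal]

end Matrix

theorem stmt18_general {n₁ n₂ : ℕ}
    (S₁ : Matrix (Fin n₁) (Fin n₁) ℝ) (t₁ : Matrix (Fin n₁) Unit ℝ)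
    (t₁' : Matrix Unit (Fin n₁) ℝ) (r₁ r₂ : ℝ)
    (S₂ : Matrix (Fin n₂) (Fin n₂) ℝ) (t₂ : Matrix (Fin n₂) Unit ℝ)
    (t₂' : Matrix Unit (Fin n₂) ℝ)
    (S : Matrix ((Fin n₁ ⊕ Unit) ⊕ (Unit ⊕ Fin n₂))
      ((Fin n₁ ⊕ Unit) ⊕ (Unit ⊕ Fin n₂)) ℝ)
    (hS : S = Matrix.fromBlocks
      (Matrix.fromBlocks S₁ 0 t₁' 0)
      (Matrix.fromBlocks t₁ 0 (Matrix.of fun _ _ => r₁) 0)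
      (Matrix.fromBlocks 0 (Matrix.of fun _ _ => r₂) 0 t₂)
      (Matrix.fromBlocks 0 t₂' 0 S₂))
    (hSorth : S * S.transpose = 1)
    (z₁ : Fin n₁ → ℂ) (z₂ : Fin n₂ → ℂ) (ze : ℂ)
    (hz₁ : ∀ i, ‖z₁ i‖ = 1)
    (U : Matrix ((Fin n₁ ⊕ Unit) ⊕ (Unit ⊕ Fin n₂))
      ((Fin n₁ ⊕ Unit) ⊕ (Unit ⊕ Fin n₂)) ℂ)
    (hU : U = Matrix.diagonal
        (Sum.elim (Sum.elim z₁ fun _ => ze) (Sum.elim (fun _ => ze) z₂))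
        * S.map Complex.ofReal)
    (a₁ : Fin n₁ → ℂ)
    (ha₁ : (Matrix.diagonal z₁ * S₁.map Complex.ofReal - 1).mulVec a₁ = 0) :
    (t₁'.map Complex.ofReal).mulVec a₁ = 0 ∧
    (1 - U).mulVec
      (Sum.elim (Sum.elim a₁ fun _ => 0) (Sum.elim (fun _ => 0) fun _ => 0)) = 0 := by
  have hblk : S₁ᵀ * S₁ + t₁'ᵀ * t₁' = 1 := by
    have h := congrArg (fun M => M.toBlocks₁₁.toBlocks₁₁) (mul_eq_one_comm.mp hSorth)
    simpa only [hS, toBlocks₁₁_transpose_mul_self_fromBlocks, toBlocks₁₁_add, transpose_zero,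
      Matrix.zero_mul, add_zero, ← diagonal_one, toBlocks₁₁_diagonal] using h
  set A := S₁.map Complex.ofReal
  have heig : diagonal z₁ *ᵥ A *ᵥ a₁ = a₁ := by
    rwa [sub_mulVec, one_mulVec, sub_eq_zero, ← mulVec_mulVec] at ha₁
  have hz : ∀ i, star (z₁ i) * z₁ i = 1 := fun i => by
    rw [Complex.star_def, Complex.conj_mul', hz₁ i, Complex.ofReal_one, one_pow]
  have ht : (t₁'.map Complex.ofReal) *ᵥ a₁ = 0 := by
    refine mulVec_eq_zero_of_conjTranspose_mul_add_eq_one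
      (conjTranspose_map_ofReal_mul_add_eq_one hblk) ?_
    rw [← star_diagonal_mulVec_dotProduct_diagonal_mulVec hz, heig]
  refine ⟨ht, ?_⟩
  have hvec : (Sum.elim (Sum.elim a₁ fun _ => 0) (Sum.elim (fun _ => 0) fun _ => 0) :
      (Fin n₁ ⊕ Unit) ⊕ (Unit ⊕ Fin n₂) → ℂ) = Sum.elim (Sum.elim a₁ 0) 0 := by
    simp only [← Pi.zero_def, Sum.elim_zero_zero]
  have hSa : S.map Complex.ofReal *ᵥ Sum.elim (Sum.elim a₁ 0) 0 =
      Sum.elim (Sum.elim (A *ᵥ a₁) 0) 0 := by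
    simp only [hS, fromBlocks_map, fromBlocks_mulVec_sum_elim_zero,
      Matrix.map_zero _ Complex.ofReal_zero, zero_mulVec, Sum.elim_zero_zero]
    rw [ht]
  rw [hvec, sub_mulVec, one_mulVec, sub_eq_zero, hU, ← mulVec_mulVec, hSa]
  simp only [← fromBlocks_diagonal, fromBlocks_mulVec_sum_elim_zero, zero_mulVec, heig]

/-- For a real orthogonal matrix `S` with the block structure
`[[S₁, 0, t₁, 0], [t₁', 0, r₁, 0], [0, r₂, 0, t₂'], [0, t₂, 0, S₂]]`, and
`U = (z₁ ⊕ z_e ⊕ z_e ⊕ z₂) * S` with unimodular diagonal factors: if `a₁` satisfies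
`(z₁ S₁ - 1) a₁ = 0` then `t₁' a₁ = 0` and the vector `(a₁, 0, 0, 0)` lies in the
kernel of `1 - U`. -/
theorem stmt18 {n₁ n₂ : ℕ}
    (S₁ : Matrix (Fin n₁) (Fin n₁) ℝ) (t₁ : Matrix (Fin n₁) Unit ℝ)
    (t₁' : Matrix Unit (Fin n₁) ℝ) (r₁ r₂ : ℝ)
    (S₂ : Matrix (Fin n₂) (Fin n₂) ℝ) (t₂ : Matrix (Fin n₂) Unit ℝ)
    (t₂' : Matrix Unit (Fin n₂) ℝ)
    (S : Matrix ((Fin n₁ ⊕ Unit) ⊕ (Unit ⊕ Fin n₂))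
      ((Fin n₁ ⊕ Unit) ⊕ (Unit ⊕ Fin n₂)) ℝ)
    (hS : S = Matrix.fromBlocks
      (Matrix.fromBlocks S₁ 0 t₁' 0)
      (Matrix.fromBlocks t₁ 0 (Matrix.of fun _ _ => r₁) 0)
      (Matrix.fromBlocks 0 (Matrix.of fun _ _ => r₂) 0 t₂)
      (Matrix.fromBlocks 0 t₂' 0 S₂))
    (hSorth : S * S.transpose = 1)
    (z₁ : Fin n₁ → ℂ) (z₂ : Fin n₂ → ℂ) (ze : ℂ)
    (hz₁ : ∀ i, ‖z₁ i‖ = 1) (hz₂ : ∀ i, ‖z₂ i‖ = 1)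
    (hze : ‖ze‖ = 1)
    (U : Matrix ((Fin n₁ ⊕ Unit) ⊕ (Unit ⊕ Fin n₂))
      ((Fin n₁ ⊕ Unit) ⊕ (Unit ⊕ Fin n₂)) ℂ)
    (hU : U = Matrix.diagonal
        (Sum.elim (Sum.elim z₁ fun _ => ze) (Sum.elim (fun _ => ze) z₂))
        * S.map Complex.ofReal)
    (a₁ : Fin n₁ → ℂ)
    (ha₁ : (Matrix.diagonal z₁ * S₁.map Complex.ofReal - 1).mulVec a₁ = 0) :
    (t₁'.map Complex.ofReal).mulVec a₁ = 0 ∧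
    (1 - U).mulVec
      (Sum.elim (Sum.elim a₁ fun _ => 0) (Sum.elim (fun _ => 0) fun _ => 0)) = 0 :=
  stmt18_general S₁ t₁ t₁' r₁ r₂ S₂ t₂ t₂' S hS hSorth z₁ z₂ ze hz₁ U hU a₁ ha₁
end

section
/- Let n₁, n₂ ∈ ℕ and consider complex square matrices indexed by (Fin n₁) ⊔ {e} ⊔ {ê} ⊔ (Fin n₂). Let S have the block structure S = [[S₁, 0, t₁, 0], [t₁′, 0, r₁, 0], [0, r₂, 0, t₂′], [0, t₂, 0, S₂]], let z₁, z₂ be diagonal matrices of sizes n₁, n₂, let z_e ∈ ℂ, and set U = (z₁ ⊕ z_e ⊕ z_e ⊕ z₂) · S. Assume D₁ := z₁S₁ − I and D₂ := z₂S₂ − I are invertible and define the scalars 𝒮₁ := r₁ − t₁′ D₁⁻¹ z₁ t₁ and 𝒮₂ := r₂ − t₂′ D₂⁻¹ z₂ t₂. Then the kernel of U − I equals the kernel of the matrix M = [[D₁, 0, z₁t₁, 0], [0, −1, z_e𝒮₁, 0], [0, z_e𝒮₂, −1, 0], [0, z₂t₂, 0, D₂]]. -/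
lemma ker_unit_mul {m : Type*} [Fintype m] [DecidableEq m] (L A : Matrix m m ℂ)
    (hL : IsUnit L) :
    LinearMap.ker (L * A).mulVecLin = LinearMap.ker A.mulVecLin := by
  ext v
  have hdet : IsUnit L.det := (Matrix.isUnit_iff_isUnit_det L).mp hL
  have hinv : L⁻¹ * L = 1 := Matrix.nonsing_inv_mul L hdet
  simp only [LinearMap.mem_ker, Matrix.mulVecLin_apply, ← Matrix.mulVec_mulVec]
  constructor
  · intro h
    have := congrArg (L⁻¹.mulVec ·) h
    simpa [Matrix.mulVec_mulVec, ← Matrix.mul_assoc, hinv] using this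
  · intro h; rw [h, Matrix.mulVec_zero]

lemma diag_const_unit (c : ℂ) :
    Matrix.diagonal (fun _ : Unit => c) = c • (1 : Matrix Unit Unit ℂ) := by
  ext i j
  simp [Matrix.diagonal, Matrix.one_apply]

/-- Bridge decomposition of the kernel: with
`S = [[S₁, 0, t₁, 0], [t₁', 0, r₁, 0], [0, r₂, 0, t₂'], [0, t₂, 0, S₂]]`,
`U = (z₁ ⊕ z_e ⊕ z_e ⊕ z₂) * S`, `D₁ = z₁ S₁ - 1`, `D₂ = z₂ S₂ - 1` invertible and
`𝒮ᵢ = rᵢ - tᵢ' Dᵢ⁻¹ zᵢ tᵢ`, the kernel of `U - 1` equals the kernel of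
`M = [[D₁, 0, z₁ t₁, 0], [0, -1, z_e 𝒮₁, 0], [0, z_e 𝒮₂, -1, 0], [0, z₂ t₂, 0, D₂]]`. -/
theorem stmt19 {n₁ n₂ : ℕ}
    (S₁ : Matrix (Fin n₁) (Fin n₁) ℂ) (t₁ : Matrix (Fin n₁) Unit ℂ)
    (t₁' : Matrix Unit (Fin n₁) ℂ) (r₁ r₂ : ℂ)
    (S₂ : Matrix (Fin n₂) (Fin n₂) ℂ) (t₂ : Matrix (Fin n₂) Unit ℂ)
    (t₂' : Matrix Unit (Fin n₂) ℂ)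
    (z₁ : Fin n₁ → ℂ) (z₂ : Fin n₂ → ℂ) (ze : ℂ)
    (S U : Matrix ((Fin n₁ ⊕ Unit) ⊕ (Unit ⊕ Fin n₂))
      ((Fin n₁ ⊕ Unit) ⊕ (Unit ⊕ Fin n₂)) ℂ)
    (hS : S = Matrix.fromBlocks
      (Matrix.fromBlocks S₁ 0 t₁' 0)
      (Matrix.fromBlocks t₁ 0 (Matrix.of fun _ _ => r₁) 0)
      (Matrix.fromBlocks 0 (Matrix.of fun _ _ => r₂) 0 t₂)
      (Matrix.fromBlocks 0 t₂' 0 S₂))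
    (hU : U = Matrix.diagonal
        (Sum.elim (Sum.elim z₁ fun _ => ze) (Sum.elim (fun _ => ze) z₂)) * S)
    (D₁ : Matrix (Fin n₁) (Fin n₁) ℂ) (hD₁ : D₁ = Matrix.diagonal z₁ * S₁ - 1)
    (D₂ : Matrix (Fin n₂) (Fin n₂) ℂ) (hD₂ : D₂ = Matrix.diagonal z₂ * S₂ - 1)
    (hD₁u : IsUnit D₁) (hD₂u : IsUnit D₂)
    (s₁ s₂ : ℂ)
    (hs₁ : s₁ = r₁ - (t₁' * D₁⁻¹ * Matrix.diagonal z₁ * t₁) () ())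
    (hs₂ : s₂ = r₂ - (t₂' * D₂⁻¹ * Matrix.diagonal z₂ * t₂) () ())
    (M : Matrix ((Fin n₁ ⊕ Unit) ⊕ (Unit ⊕ Fin n₂))
      ((Fin n₁ ⊕ Unit) ⊕ (Unit ⊕ Fin n₂)) ℂ)
    (hM : M = Matrix.fromBlocks
      (Matrix.fromBlocks D₁ 0 0 (-1))
      (Matrix.fromBlocks (Matrix.diagonal z₁ * t₁) 0 (Matrix.of fun _ _ => ze * s₁) 0)
      (Matrix.fromBlocks 0 (Matrix.of fun _ _ => ze * s₂) 0 (Matrix.diagonal z₂ * t₂))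
      (Matrix.fromBlocks (-1) 0 0 D₂)) :
    LinearMap.ker (U - 1).mulVecLin = LinearMap.ker M.mulVecLin := by
  have hD₁inv : D₁⁻¹ * D₁ = 1 :=
    Matrix.nonsing_inv_mul D₁ ((Matrix.isUnit_iff_isUnit_det D₁).mp hD₁u)
  have hD₂inv : D₂⁻¹ * D₂ = 1 :=
    Matrix.nonsing_inv_mul D₂ ((Matrix.isUnit_iff_isUnit_det D₂).mp hD₂u)
  -- the block-diagonal matrix as nested fromBlocks
  have hdiag : Matrix.diagonal
      (Sum.elim (Sum.elim z₁ fun _ => ze) (Sum.elim (fun _ => ze) z₂)) =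
      Matrix.fromBlocks
        (Matrix.fromBlocks (Matrix.diagonal z₁) 0 0 (Matrix.diagonal fun _ : Unit => ze)) 0 0
        (Matrix.fromBlocks (Matrix.diagonal fun _ : Unit => ze) 0 0 (Matrix.diagonal z₂)) := by
    simp only [Matrix.fromBlocks_diagonal]
  -- explicit block form of U - 1
  have hU1 : U - 1 = Matrix.fromBlocks
      (Matrix.fromBlocks D₁ 0 (ze • t₁') (-1))
      (Matrix.fromBlocks (Matrix.diagonal z₁ * t₁) 0 (ze • Matrix.of fun _ _ => r₁) 0)
      (Matrix.fromBlocks 0 (ze • Matrix.of fun _ _ => r₂) 0 (Matrix.diagonal z₂ * t₂))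
      (Matrix.fromBlocks (-1) (ze • t₂') 0 D₂) := by
    rw [hU, hS, hdiag, ← Matrix.fromBlocks_one, ← Matrix.fromBlocks_one (l := Fin n₁),
      ← Matrix.fromBlocks_one (l := Unit) (m := Fin n₂)]
    simp only [Matrix.fromBlocks_multiply, diag_const_unit, Matrix.smul_mul, Matrix.one_mul,
      Matrix.mul_zero, Matrix.zero_mul, Matrix.mul_one, add_zero, zero_add,
      sub_eq_add_neg, Matrix.fromBlocks_neg, Matrix.fromBlocks_add, neg_zero, hD₁, hD₂]
  set X₁ : Matrix Unit (Fin n₁) ℂ := ze • (t₁' * D₁⁻¹) with hX₁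
  set X₂ : Matrix Unit (Fin n₂) ℂ := ze • (t₂' * D₂⁻¹) with hX₂
  set L : Matrix ((Fin n₁ ⊕ Unit) ⊕ (Unit ⊕ Fin n₂))
      ((Fin n₁ ⊕ Unit) ⊕ (Unit ⊕ Fin n₂)) ℂ :=
    Matrix.fromBlocks (Matrix.fromBlocks 1 0 (-X₁) 1) 0 0
      (Matrix.fromBlocks 1 (-X₂) 0 1) with hL
  have hLunit : IsUnit L := by
    have h : L * Matrix.fromBlocks (Matrix.fromBlocks 1 0 X₁ 1) 0 0
        (Matrix.fromBlocks 1 X₂ 0 1) = 1 := by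
      rw [hL]
      simp only [Matrix.fromBlocks_multiply, Matrix.one_mul, Matrix.mul_one, Matrix.mul_zero,
        Matrix.zero_mul, add_zero, zero_add, Matrix.neg_mul, neg_add_cancel, add_neg_cancel,
        Matrix.fromBlocks_one]
    have : Invertible L := invertibleOfRightInverse _ _ h
    exact isUnit_of_invertible L
  have e1 : -X₁ * D₁ + ze • t₁' = (0 : Matrix Unit (Fin n₁) ℂ) := by
    rw [hX₁, Matrix.neg_mul, Matrix.smul_mul, Matrix.mul_assoc, hD₁inv, Matrix.mul_one,
      neg_add_cancel]
  have e4 : ze • t₂' + -X₂ * D₂ = (0 : Matrix Unit (Fin n₂) ℂ) := by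
    rw [hX₂, Matrix.neg_mul, Matrix.smul_mul, Matrix.mul_assoc, hD₂inv, Matrix.mul_one,
      add_neg_cancel]
  have a2 : -X₁ * (Matrix.diagonal z₁ * t₁) =
      -(ze • (t₁' * D₁⁻¹ * Matrix.diagonal z₁ * t₁)) := by
    rw [hX₁, Matrix.neg_mul, Matrix.smul_mul, ← Matrix.mul_assoc]
  have a3 : -X₂ * (Matrix.diagonal z₂ * t₂) =
      -(ze • (t₂' * D₂⁻¹ * Matrix.diagonal z₂ * t₂)) := by
    rw [hX₂, Matrix.neg_mul, Matrix.smul_mul, ← Matrix.mul_assoc]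
  have e2 : -X₁ * (Matrix.diagonal z₁ * t₁) + ze • (Matrix.of fun _ _ => r₁) =
      Matrix.of fun _ _ => ze * s₁ := by
    rw [a2]
    ext i j
    obtain ⟨⟩ := i; obtain ⟨⟩ := j
    simp only [Matrix.add_apply, Matrix.neg_apply, Matrix.smul_apply, Matrix.of_apply,
      smul_eq_mul, hs₁]
    ring
  have e3 : ze • (Matrix.of fun _ _ => r₂) + -X₂ * (Matrix.diagonal z₂ * t₂) =
      Matrix.of fun _ _ => ze * s₂ := by
    rw [a3]
    ext i j
    obtain ⟨⟩ := i; obtain ⟨⟩ := j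
    simp only [Matrix.add_apply, Matrix.neg_apply, Matrix.smul_apply, Matrix.of_apply,
      smul_eq_mul, hs₂]
    ring
  have key : M = L * (U - 1) := by
    rw [hU1, hM, hL]
    simp only [Matrix.fromBlocks_multiply, Matrix.one_mul, Matrix.mul_one, Matrix.mul_zero,
      Matrix.zero_mul, add_zero, zero_add, e1, e2, e3, e4]
  rw [key, ker_unit_mul _ _ hLunit]
end
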